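/- For su(N), the smallest positive integer γ such that (γ/2)·(Λ_a, Λ_a) ∈ ℤ for all fundamental weights Λ_a (1 ≤ a ≤ N−1) equals 2N if N is even and N if N is odd. -/

import Mathlib

open Finset

/-- The `i`-th fundamental weight of `su(N)` realized in `ℝ^N`. -/
noncomputable def fundWeight (N i : ℕ) : Fin N → ℝ :=
  fun j => if (j : ℕ) < i then ((N : ℝ) - i) / N else -(i : ℝ) / N

lemma sumsq (N a : ℕ) (hN : 0 < N) (ha : a ≤ N) :
    ∑ k : Fin N, fundWeight N a k * fundWeight N a k
      = (a : ℝ) * ((N : ℝ) - a) / N := by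
  have hN' : (0:ℝ) < N := by exact_mod_cast hN
  have h1 : ∑ k : Fin N, fundWeight N a k * fundWeight N a k
      = ∑ i ∈ range N, (if i < a then (((N : ℝ) - a) / N)^2 else ((a : ℝ) / N)^2) := by
    simp only [fundWeight]
    rw [Fin.sum_univ_eq_sum_range (fun i =>
      (if i < a then ((N:ℝ)-a)/N else -(a:ℝ)/N) * (if i < a then ((N:ℝ)-a)/N else -(a:ℝ)/N))]
    refine Finset.sum_congr rfl fun i hi => ?_
    split <;> ring
  rw [h1, Finset.sum_ite, Finset.sum_const, Finset.sum_const]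
  have hf : Finset.filter (fun i => i < a) (range N) = range a := by
    ext i; simp; omega
  have hf2 : Finset.filter (fun i => ¬ i < a) (range N) = Finset.Ico a N := by
    ext i; simp; omega
  rw [hf, hf2]
  simp [Nat.card_Ico]
  have h3 : ((N - a : ℕ) : ℝ) = (N:ℝ) - a := by
    push_cast [ha]; ring
  rw [h3]
  field_simp
  ring

/-- The smallest positive integer `γ` such that `(γ/2)·(Λ_a, Λ_a) ∈ ℤ` for all fundamental
weights `Λ_a`, `1 ≤ a ≤ N-1`, equals `2N` if `N` is even and `N` if `N` is odd. -/
theorem stmt_1 (N : ℕ) (hN : 2 ≤ N) :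
    IsLeast {γ : ℕ | 0 < γ ∧ ∀ a : ℕ, 1 ≤ a → a ≤ N - 1 →
        ∃ z : ℤ, (γ : ℝ) / 2 * (∑ k : Fin N, fundWeight N a k * fundWeight N a k) = z}
      (if Even N then 2 * N else N) := by
  have hN0 : 0 < N := by omega
  have hNR : (N:ℝ) ≠ 0 := by positivity
  have hcN : Nat.Coprime N (N-1) := by
    have h' : N = (N-1)+1 := by omega
    rw [h']; simp
  constructor
  · -- membership
    by_cases hEv : Even N
    · rw [if_pos hEv]
      refine ⟨by omega, fun a ha1 ha2 => ?_⟩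
      have haN : a ≤ N := by omega
      rw [sumsq N a hN0 haN]
      refine ⟨(a * (N - a) : ℕ), ?_⟩
      rw [Int.cast_natCast]
      push_cast [Nat.cast_sub haN]
      field_simp
    · rw [if_neg hEv]
      refine ⟨by omega, fun a ha1 ha2 => ?_⟩
      have haN : a ≤ N := by omega
      rw [sumsq N a hN0 haN]
      have hOdd : Odd N := Nat.not_even_iff_odd.mp hEv
      have h2 : 2 ∣ a * (N - a) := by
        rcases Nat.even_or_odd a with h | h
        · exact Dvd.dvd.mul_right h.two_dvd _
        · exact Dvd.dvd.mul_left (Nat.Odd.sub_odd hOdd h).two_dvd _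
      refine ⟨(a * (N - a) / 2 : ℕ), ?_⟩
      have hc : ((a * (N - a) / 2 : ℕ) : ℝ) = ((a * (N - a) : ℕ) : ℝ) / 2 :=
        Nat.cast_div h2 two_ne_zero
      rw [Int.cast_natCast, hc, Nat.cast_mul, Nat.cast_sub haN]
      field_simp
  · -- lower bound
    rintro γ ⟨hpos, hall⟩
    obtain ⟨z, hz⟩ := hall 1 le_rfl (by omega)
    rw [sumsq N 1 hN0 (by omega)] at hz
    have key : (γ : ℝ) * ((N:ℝ) - 1) = 2 * (N:ℝ) * z := by
      field_simp at hz
      push_cast at hz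
      linarith
    have hdvdZ : ((2*N : ℕ) : ℤ) ∣ ((γ * (N-1) : ℕ) : ℤ) := by
      refine ⟨z, ?_⟩
      have h : ((γ * (N-1) : ℕ) : ℝ) = ((2*N : ℕ) : ℝ) * z := by
        push_cast [Nat.cast_sub (show 1 ≤ N by omega)]
        linarith [key]
      exact_mod_cast h
    have hdvd : 2*N ∣ γ * (N-1) := by exact_mod_cast hdvdZ
    by_cases hEv : Even N
    · rw [if_pos hEv]
      have hc : Nat.Coprime (2*N) (N-1) := by
        refine Nat.Coprime.mul ?_ hcN
        have hodd : Odd (N-1) := by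
          rcases hEv with ⟨m, hm⟩
          exact ⟨m-1, by omega⟩
        exact Nat.coprime_two_left.mpr hodd
      exact Nat.le_of_dvd hpos (hc.dvd_of_dvd_mul_right hdvd)
    · rw [if_neg hEv]
      have hOdd : Odd N := Nat.not_even_iff_odd.mp hEv
      obtain ⟨m, hm⟩ : ∃ m, N - 1 = 2 * m := by
        rcases hOdd with ⟨k, hk⟩; exact ⟨k, by omega⟩
      have hdvd2 : 2*N ∣ 2*(γ*m) := by
        rwa [show γ * (N-1) = 2*(γ*m) by rw [hm]; ring] at hdvd
      have hNdvd : N ∣ γ * m := (Nat.mul_dvd_mul_iff_left (by norm_num : 0 < 2)).mp hdvd2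
      have hcm : Nat.Coprime N m := hcN.coprime_dvd_right (hm ▸ dvd_mul_left m 2)
      exact Nat.le_of_dvd hpos (hcm.dvd_of_dvd_mul_right hNdvd)
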